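/- arXiv:1909.12656 — 6 statements merged into one kernel-verified Lean document; each statement's English description precedes it below -/
import Mathlib

section
/- Let L be a finite lattice, S ⊆ L a subset containing the top of L, and let M = { meet of T : T ⊆ S, T nonempty } ∪ {top}. For any implication x → y on L: every element of S satisfies x → y if and only if every element of M satisfies x → y. -/
theorem le_finset_inf_of_le_imp_le {α : Type*} [SemilatticeInf α] [OrderTop α] {x y : α}
    {T : Finset α} (hT : ∀ z ∈ T, x ≤ z → y ≤ z) (hx : x ≤ T.inf id) : y ≤ T.inf id :=
  Finset.le_inf fun t ht => hT t ht (hx.trans (Finset.inf_le ht))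

theorem stmt5_general {L : Type*} [Lattice L] [OrderTop L]
    (S : Set L) (x y : L) :
    let M : Set L := {z | ∃ T : Finset L, ↑T ⊆ S ∧ T.Nonempty ∧ z = T.inf id} ∪ {⊤}
    (∀ z ∈ S, x ≤ z → y ≤ z) ↔ (∀ z ∈ M, x ≤ z → y ≤ z) := by
  intro M
  constructor
  · rintro hS z (⟨T, hTS, -, rfl⟩ | rfl)
    · exact le_finset_inf_of_le_imp_le fun t ht => hS t (hTS ht)
    · exact fun _ => le_top
  · intro hM z hz
    exact hM z (Or.inl ⟨{z}, by simpa using hz, Finset.singleton_nonempty z, by simp⟩)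

theorem stmt5 {L : Type*} [Lattice L] [Fintype L] [OrderTop L]
    (S : Set L) (htop : (⊤ : L) ∈ S) (x y : L) :
    let M : Set L := {z | ∃ T : Finset L, ↑T ⊆ S ∧ T.Nonempty ∧ z = T.inf id} ∪ {⊤}
    (∀ z ∈ S, x ≤ z → y ≤ z) ↔ (∀ z ∈ M, x ≤ z → y ≤ z) :=
  stmt5_general S x y
end

section
/- Let n ≥ 3 and let L1, ..., Ln be finite lattices, and g : ∏ L_i → {0,1}^n componentwise via monotone maps h_i with h_i(bot)=0 and h_i(top)=1. Then g preserves binary meets if and only if for every meet-subsemilattice L' of ∏ L_i containing the top, the image g(L') is closed under componentwise meet in {0,1}^n. -/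
/-!
If `g` fails to preserve `x ⊓ y`, it fails at some coordinate `i`, with `a = x i`, `b = y i`.
Pick distinct coordinates `j`, `k` other than `i`; let `X` be `a` at `i`, `⊥` at `j`, `⊤`
elsewhere, and `Y` be `b` at `i`, `⊥` at `k`, `⊤` elsewhere. The meet-subsemilattice
`{⊤, X, Y, X ⊓ Y}` has `g X ⊓ g Y` outside its image: the zeros at `j` and `k` exclude `g ⊤`,
`g X` and `g Y`, and coordinate `i` excludes `g (X ⊓ Y)`.
-/

lemma infClosed_insert_top_insert_insert_inf {α : Type*} [SemilatticeInf α] [OrderTop α]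
    (x y : α) :
    InfClosed ({⊤, x, y, x ⊓ y} : Set α) := by
  rintro p (rfl | rfl | rfl | rfl) q (rfl | rfl | rfl | rfl) <;> simp [inf_comm]

lemma exists_ne_ne_of_two_lt_card {ι : Type*} [Fintype ι] [DecidableEq ι]
    (hι : 2 < Fintype.card ι) (i : ι) :
    ∃ j k, i ≠ j ∧ i ≠ k ∧ j ≠ k := by
  have hcard : 1 < (Finset.univ.erase i).card := by
    rw [Finset.card_erase_of_mem (Finset.mem_univ i), Finset.card_univ]
    omega
  obtain ⟨j, hj, k, hk, hjk⟩ := Finset.one_lt_card.mp hcard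
  exact ⟨j, k, (Finset.ne_of_mem_erase hj).symm, (Finset.ne_of_mem_erase hk).symm, hjk⟩

section TopExcept

variable {ι : Type*} [DecidableEq ι] {L : ι → Type*} [∀ i, SemilatticeInf (L i)]
  [∀ i, OrderBot (L i)] [∀ i, OrderTop (L i)]

def topExcept (i : ι) (a : L i) (j : ι) : ∀ m, L m :=
  Function.update (Function.update ⊤ i a) j ⊥

variable {i j m : ι} {a : L i}

lemma topExcept_apply_left (hij : i ≠ j) : topExcept i a j i = a := by
  simp [topExcept, Function.update_of_ne hij]

lemma topExcept_apply_right : topExcept i a j j = ⊥ := by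
  simp [topExcept]

lemma topExcept_apply_of_ne (hmi : m ≠ i) (hmj : m ≠ j) : topExcept i a j m = ⊤ := by
  simp [topExcept, Function.update_of_ne hmi, Function.update_of_ne hmj]

variable {β : Type*} [SemilatticeInf β] [BoundedOrder β] [Nontrivial β]
  {h : ∀ i, L i → β}

theorem map_inf_notMem_image_topExcept (hbot : ∀ i, h i ⊥ = ⊥) (htop : ∀ i, h i ⊤ = ⊤)
    {k : ι} (hij : i ≠ j) (hik : i ≠ k) (hjk : j ≠ k) {b : L i}
    (hab : h i (a ⊓ b) ≠ h i a ⊓ h i b) :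
    Pi.map h (topExcept i a j) ⊓ Pi.map h (topExcept i b k) ∉
      Pi.map h '' {⊤, topExcept i a j, topExcept i b k, topExcept i a j ⊓ topExcept i b k} := by
  have hj : (Pi.map h (topExcept i a j) ⊓ Pi.map h (topExcept i b k)) j = ⊥ := by
    simp [Pi.map, topExcept_apply_right, hbot]
  have hk : (Pi.map h (topExcept i a j) ⊓ Pi.map h (topExcept i b k)) k = ⊥ := by
    simp [Pi.map, topExcept_apply_right, hbot]
  rintro ⟨z, hz | hz | hz | hz, hgz⟩ <;> subst hz
  · exact top_ne_bot (α := β) (by simpa [Pi.map, htop] using (congrFun hgz j).trans hj)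
  · exact top_ne_bot (α := β) (by
      simpa [Pi.map, topExcept_apply_of_ne hik.symm hjk.symm, htop] using (congrFun hgz k).trans hk)
  · exact top_ne_bot (α := β) (by
      simpa [Pi.map, topExcept_apply_of_ne hij.symm hjk, htop] using (congrFun hgz j).trans hj)
  · apply hab
    simpa only [Pi.map, Pi.inf_apply, topExcept_apply_left hij, topExcept_apply_left hik]
      using congrFun hgz i

end TopExcept

theorem stmt7_general {n : ℕ} (hn : 3 ≤ n) {L : Fin n → Type*} [∀ i, Lattice (L i)]
    [∀ i, BoundedOrder (L i)]
    (h : ∀ i, L i → Bool)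
    (hbot : ∀ i, h i ⊥ = false) (htop : ∀ i, h i ⊤ = true) :
    let g : (∀ i, L i) → (Fin n → Bool) := fun x i => h i (x i)
    (∀ x y, g (x ⊓ y) = g x ⊓ g y) ↔
      ∀ L' : Set (∀ i, L i), (∀ a ∈ L', ∀ b ∈ L', a ⊓ b ∈ L') → (⊤ : ∀ i, L i) ∈ L' →
        ∀ u ∈ g '' L', ∀ v ∈ g '' L', u ⊓ v ∈ g '' L' := by
  intro g
  constructor
  · intro hg L' hL' _
    exact InfClosed.image (fun a ha b hb ↦ hL' a ha b hb) (⟨g, hg⟩ : InfHom _ _)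
  · intro hclosed x y
    by_contra hne
    obtain ⟨i, hi⟩ : ∃ i, h i (x i ⊓ y i) ≠ h i (x i) ⊓ h i (y i) := by
      simpa [g, funext_iff] using hne
    obtain ⟨j, k, hij, hik, hjk⟩ :=
      exists_ne_ne_of_two_lt_card (by simp only [Fintype.card_fin]; omega) i
    have hL' := infClosed_insert_top_insert_insert_inf (topExcept i (x i) j) (topExcept i (y i) k)
    refine map_inf_notMem_image_topExcept hbot htop hij hik hjk hi
      (hclosed _ (fun a ha b hb ↦ hL' ha hb) (by simp) _ ?_ _ ?_) <;>
      exact Set.mem_image_of_mem _ (by simp)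

theorem stmt7 {n : ℕ} (hn : 3 ≤ n) {L : Fin n → Type*} [∀ i, Lattice (L i)]
    [∀ i, Fintype (L i)] [∀ i, BoundedOrder (L i)]
    (h : ∀ i, L i → Bool) (hmono : ∀ i, Monotone (h i))
    (hbot : ∀ i, h i ⊥ = false) (htop : ∀ i, h i ⊤ = true) :
    let g : (∀ i, L i) → (Fin n → Bool) := fun x i => h i (x i)
    (∀ x y, g (x ⊓ y) = g x ⊓ g y) ↔
      ∀ L' : Set (∀ i, L i), (∀ a ∈ L', ∀ b ∈ L', a ⊓ b ∈ L') → (⊤ : ∀ i, L i) ∈ L' →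
        ∀ u ∈ g '' L', ∀ v ∈ g '' L', u ⊓ v ∈ g '' L' :=
  stmt7_general hn h hbot htop
end

section
/- Let L be a finite lattice. An element p ∈ L is prime if y ∧ z ≤ p implies y ≤ p or z ≤ p; an element c is co-prime if c ≤ y ∨ z implies c ≤ y or c ≤ z. If p is a prime element of L, then the set {x ∈ L : x ≰ p} has a unique minimum element c, and this c is co-prime. -/
/-!
Primality of `p` says exactly that `{x | ¬ x ≤ p}` is closed under `⊓`; it is nonempty since it
contains `⊤`, so in a finite lattice the meet `c` of all its elements belongs to it and is its
least element. If `c ≤ y ⊔ z` with `c ≰ y` and `c ≰ z`, then minimality of `c` forces `y ≤ p`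
and `z ≤ p`, hence `c ≤ y ⊔ z ≤ p`, a contradiction.
-/

theorem InfClosed.exists_isLeast {α : Type*} [SemilatticeInf α] {s : Set α} (hs : InfClosed s)
    (hfin : s.Finite) (hne : s.Nonempty) : ∃ c, IsLeast s c := by
  have hne' : hfin.toFinset.Nonempty := hfin.toFinset_nonempty.2 hne
  refine ⟨hfin.toFinset.inf' hne' id, ?_, fun x hx => Finset.inf'_le id (hfin.mem_toFinset.2 hx)⟩
  exact hs.finsetInf'_mem hne' fun x hx => hfin.mem_toFinset.1 hx

theorem InfPrime.infClosed_setOf_not_le {α : Type*} [SemilatticeInf α] {p : α} (hp : InfPrime p) :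
    InfClosed {x | ¬ x ≤ p} :=
  fun _ hx _ hy hxy => (hp.inf_le.1 hxy).elim hx hy

theorem IsLeast.supPrime_of_setOf_not_le {α : Type*} [Lattice α] {p c : α}
    (hc : IsLeast {x | ¬ x ≤ p} c) : SupPrime c := by
  refine ⟨fun hmin => hc.1 ((hmin inf_le_left).trans inf_le_right), fun y z hyz => ?_⟩
  by_contra! h
  have hy : y ≤ p := not_not.1 fun hy => h.1 (hc.2 hy)
  have hz : z ≤ p := not_not.1 fun hz => h.2 (hc.2 hz)
  exact hc.1 (hyz.trans (sup_le hy hz))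

theorem stmt8 {L : Type*} [Lattice L] [Fintype L] [BoundedOrder L]
    (p : L) (hp : ∀ y z : L, y ⊓ z ≤ p → y ≤ p ∨ z ≤ p) (hptop : p ≠ ⊤) :
    ∃! c : L, ¬ c ≤ p ∧ (∀ x : L, ¬ x ≤ p → c ≤ x) ∧
      (∀ y z : L, c ≤ y ⊔ z → c ≤ y ∨ c ≤ z) := by
  have hprime : InfPrime p := ⟨not_isMax_iff_ne_top.2 hptop, fun y z => hp y z⟩
  obtain ⟨c, hc⟩ := hprime.infClosed_setOf_not_le.exists_isLeast (Set.toFinite _)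
    ⟨⊤, fun htop => hptop (top_le_iff.1 htop)⟩
  refine ⟨c, ⟨hc.1, fun _ hx => hc.2 hx, fun _ _ => hc.supPrime_of_setOf_not_le.le_sup.1⟩, ?_⟩
  rintro d ⟨hdp, hdmin, -⟩
  exact IsLeast.unique ⟨hdp, fun x hx => hdmin x hx⟩ hc
end

section
/- Let L be a finite product lattice ∏_{i=1}^n L_i, let L' be a meet-subsemilattice of L containing the top, and let g : L → {0,1}^n be a componentwise monotone meet-preserving map (a reality) with componentwise thresholds: there exists x_g ∈ L with g(z)_i = 1 iff z_i ≥ (x_g)_i, and each (x_g)_i ≠ bot. Define the projection π_g(x) componentwise by π_g(x)_i = (x_g)_i if x_i ≥ (x_g)_i and bot otherwise. Then g(cl(π_g(x))) = cl'(g(π_g(x))) = cl'(g(x)), where cl is the closure operator induced by L' on L and cl' is the closure operator induced by g(L') on {0,1}^n. -/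
/-!
Two facts about the reality `g` drive the proof. First, `π_g x ≤ y ↔ g x ≤ g y`, so the elements
of `L'` above `π_g x` are exactly those whose image lies above `g x`. Second, `g` commutes with
finite meets, so `g (cl (π_g x))` is the meet of the `g y` over those `y`, which is `cl' (g x)`.
Finally `g (π_g x) = g x` because no threshold is `⊥`.
-/

open Finset

theorem Finset.inf_filter_mem_image {α β : Type*} [Fintype α] [Fintype β] [SemilatticeInf β]
    [OrderTop β] (f : α → β) (A : Set α) (P : β → Prop)
    [DecidablePred fun b => b ∈ f '' A ∧ P b] [DecidablePred fun a => a ∈ A ∧ P (f a)] :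
    (univ.filter fun b => b ∈ f '' A ∧ P b).inf id = (univ.filter fun a => a ∈ A ∧ P (f a)).inf f := by
  refine le_antisymm (Finset.le_inf fun a ha => Finset.inf_le ?_) (Finset.le_inf ?_)
  · simp only [mem_filter, mem_univ, true_and] at ha ⊢
    exact ⟨Set.mem_image_of_mem f ha.1, ha.2⟩
  · rintro b hb
    simp only [mem_filter, mem_univ, true_and] at hb
    obtain ⟨⟨a, ha, rfl⟩, hPa⟩ := hb
    exact Finset.inf_le (by simp [ha, hPa])

namespace Threshold

variable {ι : Type*} {L : ι → Type*} {t : ∀ i, L i} {g : (∀ i, L i) → ι → Bool}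

section Preorder

variable [∀ i, Preorder (L i)] [∀ i, OrderBot (L i)] [∀ i, DecidableRel (α := L i) (· ≤ ·)]

/-- `π_g` from the paper, for the threshold vector `t`. -/
def proj (t : ∀ i, L i) (z : ∀ i, L i) : ∀ i, L i := fun i => if t i ≤ z i then t i else ⊥

theorem proj_le_iff (hg : ∀ z i, g z i = true ↔ t i ≤ z i) (x y : ∀ i, L i) :
    proj t x ≤ y ↔ g x ≤ g y := by
  simp only [Pi.le_def, Bool.le_iff_imp, hg, proj]
  refine forall_congr' fun i => ?_
  split_ifs with hx <;> simp [hx]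

theorem apply_proj (hg : ∀ z i, g z i = true ↔ t i ≤ z i) (ht : ∀ i, ¬ t i ≤ ⊥)
    (x : ∀ i, L i) : g (proj t x) = g x := by
  funext i
  rw [Bool.eq_iff_iff, hg, hg, proj]
  split_ifs with hx <;> simp [hx, ht i]

end Preorder

theorem map_finset_inf [∀ i, SemilatticeInf (L i)] [∀ i, OrderTop (L i)]
    (hg : ∀ z i, g z i = true ↔ t i ≤ z i) (s : Finset (∀ i, L i)) :
    g (s.inf id) = s.inf g := by
  funext i
  rw [Bool.eq_iff_iff, hg, Finset.inf_apply, Finset.inf_apply, Finset.le_inf_iff, ← top_eq_true,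
    Finset.inf_eq_top_iff]
  simp only [id, top_eq_true, hg]

end Threshold

open scoped Classical in
theorem stmt13_general {n : ℕ} {L : Fin n → Type*} [∀ i, Lattice (L i)] [∀ i, Fintype (L i)]
    [∀ i, BoundedOrder (L i)]
    (L' : Set (∀ i, L i))
    (xg : ∀ i, L i) (hxg : ∀ i, xg i ≠ ⊥) (x : ∀ i, L i) :
    let g : (∀ i, L i) → (Fin n → Bool) := fun z i => if xg i ≤ z i then true else false
    let pi : (∀ i, L i) → (∀ i, L i) := fun z i => if xg i ≤ z i then xg i else ⊥
    let cl : (∀ i, L i) → (∀ i, L i) :=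
      fun z => (Finset.univ.filter fun y => y ∈ L' ∧ z ≤ y).inf id
    let cl' : (Fin n → Bool) → (Fin n → Bool) :=
      fun F => (Finset.univ.filter fun G => G ∈ g '' L' ∧ F ≤ G).inf id
    g (cl (pi x)) = cl' (g (pi x)) ∧ g (cl (pi x)) = cl' (g x) := by
  intro g pi cl cl'
  have hg : ∀ z i, g z i = true ↔ xg i ≤ z i := fun z i => by simp [g]
  have hpi : pi = Threshold.proj xg := rfl
  have hgpi : g (pi x) = g x := Threshold.apply_proj hg (fun i => by simpa using hxg i) x
  have hcl : g (cl (pi x)) = cl' (g x) := by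
    simp only [cl, cl', Threshold.map_finset_inf hg, Finset.inf_filter_mem_image, hpi,
      Threshold.proj_le_iff hg]
  exact ⟨hgpi ▸ hcl, hcl⟩

open scoped Classical in
theorem stmt13 {n : ℕ} {L : Fin n → Type*} [∀ i, Lattice (L i)] [∀ i, Fintype (L i)]
    [∀ i, BoundedOrder (L i)]
    (L' : Set (∀ i, L i)) (hmeet : ∀ a ∈ L', ∀ b ∈ L', a ⊓ b ∈ L')
    (htop : (⊤ : ∀ i, L i) ∈ L')
    (xg : ∀ i, L i) (hxg : ∀ i, xg i ≠ ⊥) (x : ∀ i, L i) :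
    let g : (∀ i, L i) → (Fin n → Bool) := fun z i => if xg i ≤ z i then true else false
    let pi : (∀ i, L i) → (∀ i, L i) := fun z i => if xg i ≤ z i then xg i else ⊥
    let cl : (∀ i, L i) → (∀ i, L i) :=
      fun z => (Finset.univ.filter fun y => y ∈ L' ∧ z ≤ y).inf id
    let cl' : (Fin n → Bool) → (Fin n → Bool) :=
      fun F => (Finset.univ.filter fun G => G ∈ g '' L' ∧ F ≤ G).inf id
    g (cl (pi x)) = cl' (g (pi x)) ∧ g (cl (pi x)) = cl' (g x) :=
  stmt13_general L' xg hxg x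
end

section
/- With the setup of the projection lemma (L' a meet-subsemilattice containing top, g a threshold reality with threshold vector x_g, π_g the projection), for any x, y ∈ L: every z ∈ L' satisfies 'g(x) ≤ g(z) implies g(y) ≤ g(z)' if and only if every z ∈ L' satisfies 'π_g(x) ≤ z implies π_g(y) ≤ z'. -/
/-!
Both sides of the equivalence compare elements only through the coordinates where they reach the
threshold: `g a ≤ g z` and `π_g a ≤ z` each say that every coordinate `i` with `x_g i ≤ a i` also
has `x_g i ≤ z i`. So the two quantified statements coincide hypothesis by hypothesis.
-/

section Threshold

variable {ι : Type*} {α : ι → Type*}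

open scoped Classical in
noncomputable def thresholdIndicator [∀ i, LE (α i)] (t z : ∀ i, α i) : ι → Bool :=
  fun i => if t i ≤ z i then true else false

open scoped Classical in
noncomputable def thresholdProjection [∀ i, LE (α i)] [∀ i, Bot (α i)] (t z : ∀ i, α i) : ∀ i, α i :=
  fun i => if t i ≤ z i then t i else ⊥

theorem thresholdIndicator_le_iff [∀ i, LE (α i)] (t a z : ∀ i, α i) :
    thresholdIndicator t a ≤ thresholdIndicator t z ↔ ∀ i, t i ≤ a i → t i ≤ z i := by
  refine forall_congr' fun i => ?_
  unfold thresholdIndicator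
  by_cases ha : t i ≤ a i <;> by_cases hz : t i ≤ z i <;> simp [ha, hz]

theorem thresholdProjection_le_iff [∀ i, Preorder (α i)] [∀ i, OrderBot (α i)]
    (t a z : ∀ i, α i) :
    thresholdProjection t a ≤ z ↔ ∀ i, t i ≤ a i → t i ≤ z i := by
  refine forall_congr' fun i => ?_
  unfold thresholdProjection
  by_cases ha : t i ≤ a i <;> simp [ha]

theorem thresholdIndicator_le_iff_thresholdProjection_le [∀ i, Preorder (α i)]
    [∀ i, OrderBot (α i)] (t a z : ∀ i, α i) :
    thresholdIndicator t a ≤ thresholdIndicator t z ↔ thresholdProjection t a ≤ z :=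
  (thresholdIndicator_le_iff t a z).trans (thresholdProjection_le_iff t a z).symm

end Threshold

open scoped Classical in
theorem stmt14_general {n : ℕ} {L : Fin n → Type*} [∀ i, Lattice (L i)]
    [∀ i, BoundedOrder (L i)]
    (L' : Set (∀ i, L i))
    (xg : ∀ i, L i) (x y : ∀ i, L i) :
    let g : (∀ i, L i) → (Fin n → Bool) := fun z i => if xg i ≤ z i then true else false
    let pi : (∀ i, L i) → (∀ i, L i) := fun z i => if xg i ≤ z i then xg i else ⊥
    (∀ z ∈ L', g x ≤ g z → g y ≤ g z) ↔ (∀ z ∈ L', pi x ≤ z → pi y ≤ z) := by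
  intro g pi
  have key (a z : ∀ i, L i) : g a ≤ g z ↔ pi a ≤ z :=
    thresholdIndicator_le_iff_thresholdProjection_le xg a z
  exact forall₂_congr fun z _ => imp_congr (key x z) (key y z)

open scoped Classical in
theorem stmt14 {n : ℕ} {L : Fin n → Type*} [∀ i, Lattice (L i)] [∀ i, Fintype (L i)]
    [∀ i, BoundedOrder (L i)]
    (L' : Set (∀ i, L i)) (hmeet : ∀ a ∈ L', ∀ b ∈ L', a ⊓ b ∈ L')
    (htop : (⊤ : ∀ i, L i) ∈ L')
    (xg : ∀ i, L i) (hxg : ∀ i, xg i ≠ ⊥) (x y : ∀ i, L i) :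
    let g : (∀ i, L i) → (Fin n → Bool) := fun z i => if xg i ≤ z i then true else false
    let pi : (∀ i, L i) → (∀ i, L i) := fun z i => if xg i ≤ z i then xg i else ⊥
    (∀ z ∈ L', g x ≤ g z → g y ≤ g z) ↔ (∀ z ∈ L', pi x ≤ z → pi y ≤ z) :=
  stmt14_general L' xg x y
end

section
/- Let L = ∏_{i=1}^n L_i be a finite product lattice, L' a meet-subsemilattice containing the top, and x, y ∈ L such that L' satisfies the implication x → y (every z ∈ L' with x ≤ z also has y ≤ z). Suppose g is the threshold reality whose threshold vector x_g satisfies (x_g)_i = x_i whenever x_i ≠ bot (and arbitrary nonbottom values elsewhere), so that π_g(x) = x. Then g(L') satisfies the implication g(x) → g(y): every F ∈ g(L') with g(x) ≤ F also satisfies g(y) ≤ F. -/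
section Threshold

variable {ι : Type*} {α : ι → Type*}

open scoped Classical in
noncomputable def threshold [∀ i, Preorder (α i)] (t z : ∀ i, α i) : ι → Bool :=
  fun i => if t i ≤ z i then true else false

theorem threshold_apply_eq_true_iff [∀ i, Preorder (α i)] {t z : ∀ i, α i} {i : ι} :
    threshold t z i = true ↔ t i ≤ z i := by
  simp [threshold]

theorem threshold_mono [∀ i, Preorder (α i)] (t : ∀ i, α i) : Monotone (threshold t) := by
  intro z w hzw i
  by_cases htz : t i ≤ z i
  · simp [threshold, htz, htz.trans (hzw i)]
  · simp [threshold, htz]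

theorem le_of_threshold_le [∀ i, PartialOrder (α i)] [∀ i, OrderBot (α i)] {t x z : ∀ i, α i}
    (ht : ∀ i, x i ≠ ⊥ → t i = x i) (h : threshold t x ≤ threshold t z) : x ≤ z := by
  intro i
  by_cases hxi : x i = ⊥
  · simp [hxi]
  · have hx : threshold t x i = true := threshold_apply_eq_true_iff.mpr (ht i hxi).le
    have hz : t i ≤ z i := threshold_apply_eq_true_iff.mp (Bool.eq_true_of_true_le (hx ▸ h i))
    exact ht i hxi ▸ hz

end Threshold

open scoped Classical in
theorem stmt15_general {n : ℕ} {L : Fin n → Type*} [∀ i, Lattice (L i)]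
    [∀ i, BoundedOrder (L i)]
    (L' : Set (∀ i, L i))
    (x y : ∀ i, L i) (hsat : ∀ z ∈ L', x ≤ z → y ≤ z)
    (xg : ∀ i, L i) (hxgx : ∀ i, x i ≠ ⊥ → xg i = x i) :
    let g : (∀ i, L i) → (Fin n → Bool) := fun z i => if xg i ≤ z i then true else false
    ∀ F ∈ g '' L', g x ≤ F → g y ≤ F := by
  rintro g _ ⟨z, hz, rfl⟩ hgx
  exact threshold_mono xg (hsat z hz (le_of_threshold_le hxgx hgx))

open scoped Classical in
theorem stmt15 {n : ℕ} {L : Fin n → Type*} [∀ i, Lattice (L i)] [∀ i, Fintype (L i)]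
    [∀ i, BoundedOrder (L i)]
    (L' : Set (∀ i, L i)) (hmeet : ∀ a ∈ L', ∀ b ∈ L', a ⊓ b ∈ L')
    (htop : (⊤ : ∀ i, L i) ∈ L')
    (x y : ∀ i, L i) (hsat : ∀ z ∈ L', x ≤ z → y ≤ z)
    (xg : ∀ i, L i) (hxg : ∀ i, xg i ≠ ⊥) (hxgx : ∀ i, x i ≠ ⊥ → xg i = x i) :
    let g : (∀ i, L i) → (Fin n → Bool) := fun z i => if xg i ≤ z i then true else false
    ∀ F ∈ g '' L', g x ≤ F → g y ≤ F :=
  stmt15_general L' x y hsat xg hxgx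
end
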